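/- arXiv:2212.14463 — 2 statements merged into one kernel-verified Lean document; each statement's English description precedes it below -/
import Mathlib

section
/- If x₁:α₁, …, xₙ:αₙ ⊢_JLŁ t:β for some justification term t, distinct justification variables x₁, …, xₙ, and propositional formulas α₁, …, αₙ, β, then α₁, …, αₙ ⊢_Ł β in Łukasiewicz's proof system; in particular, in the structural induction on t the new base case is t a variable xᵢ, in which case β = αᵢ is a premise and trivially αᵢ ⊢_Ł αᵢ. -/
/-!
Erasing all justification terms (`t:φ ↦ φ`) sends the Application and Sum axioms to
instances of `A → A`, the justified Łukasiewicz axioms to Łukasiewicz axioms, application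
introduction to modus ponens, and each premise `xᵢ:αᵢ` to `αᵢ`. Hence every JLŁ derivation of
`t:β` from the `xᵢ:αᵢ` erases to a Łukasiewicz derivation of `β` from the `αᵢ`.
-/

/-- Propositional formulas built from countably many atoms with ¬ and →. -/
inductive PropForm : Type
  | atom : ℕ → PropForm
  | neg  : PropForm → PropForm
  | imp  : PropForm → PropForm → PropForm

/-- Łukasiewicz's Hilbert system: axioms L1, L2, L3 and modus ponens;
derivation from a set of premises `Γ`. -/
inductive LukDeriv : Set PropForm → PropForm → Prop
  | prem {Γ φ} : φ ∈ Γ → LukDeriv Γ φ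
  | ax1 {Γ} (φ ψ : PropForm) : LukDeriv Γ (φ.imp (ψ.imp φ))
  | ax2 {Γ} (φ ψ χ : PropForm) :
      LukDeriv Γ ((φ.imp (ψ.imp χ)).imp ((φ.imp ψ).imp (φ.imp χ)))
  | ax3 {Γ} (φ ψ : PropForm) :
      LukDeriv Γ (((φ.neg).imp (ψ.neg)).imp (ψ.imp φ))
  | mp {Γ φ ψ} : LukDeriv Γ (φ.imp ψ) → LukDeriv Γ φ → LukDeriv Γ ψ

/-- Justification terms: constants, variables, application and sum. -/
inductive JTerm : Type
  | const : ℕ → JTerm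
  | var   : ℕ → JTerm
  | app   : JTerm → JTerm → JTerm
  | sum   : JTerm → JTerm → JTerm

/-- Justification formulas: propositional formulas extended with `t : φ`. -/
inductive JForm : Type
  | atom : ℕ → JForm
  | neg  : JForm → JForm
  | imp  : JForm → JForm → JForm
  | just : JTerm → JForm → JForm

/-- Embedding of propositional formulas into justification formulas. -/
def PropForm.toJ : PropForm → JForm
  | .atom n  => .atom n
  | .neg φ   => .neg φ.toJ
  | .imp φ ψ => .imp φ.toJ ψ.toJ

/-- Schematic constant specification: a distinguished constant for each of the
three Łukasiewicz axiom schemes. -/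
def c1 : JTerm := .const 1
def c2 : JTerm := .const 2
def c3 : JTerm := .const 3

/-- The system JLŁ: the Application and Sum axioms, justified Łukasiewicz axioms
(with schematic constant specification `c1, c2, c3`), modus ponens and
application introduction; derivation from a set of premises `Γ`. -/
inductive JLDeriv : Set JForm → JForm → Prop
  | prem {Γ φ} : φ ∈ Γ → JLDeriv Γ φ
  | appAx {Γ} (s t : JTerm) (φ ψ : JForm) :
      JLDeriv Γ ((JForm.just s (φ.imp ψ)).imp
        ((JForm.just t φ).imp (JForm.just (s.app t) ψ)))
  | sumL {Γ} (s t : JTerm) (ψ : JForm) :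
      JLDeriv Γ ((JForm.just s ψ).imp (JForm.just (s.sum t) ψ))
  | sumR {Γ} (s t : JTerm) (ψ : JForm) :
      JLDeriv Γ ((JForm.just t ψ).imp (JForm.just (s.sum t) ψ))
  | jax1 {Γ} (φ ψ : JForm) :
      JLDeriv Γ (JForm.just c1 (φ.imp (ψ.imp φ)))
  | jax2 {Γ} (φ ψ χ : JForm) :
      JLDeriv Γ (JForm.just c2 ((φ.imp (ψ.imp χ)).imp ((φ.imp ψ).imp (φ.imp χ))))
  | jax3 {Γ} (φ ψ : JForm) :
      JLDeriv Γ (JForm.just c3 (((φ.neg).imp (ψ.neg)).imp (ψ.imp φ)))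
  | mp {Γ φ ψ} : JLDeriv Γ (φ.imp ψ) → JLDeriv Γ φ → JLDeriv Γ ψ
  | appIntro {Γ} {s t : JTerm} {φ ψ : JForm} :
      JLDeriv Γ (JForm.just s (φ.imp ψ)) → JLDeriv Γ (JForm.just t φ) →
      JLDeriv Γ (JForm.just (s.app t) ψ)

/-- The forgetful projection of justification logic. -/
def JForm.erase : JForm → PropForm
  | .atom n => .atom n
  | .neg φ => .neg φ.erase
  | .imp φ ψ => .imp φ.erase ψ.erase
  | .just _ φ => φ.erase

@[simp]
theorem PropForm.erase_toJ : ∀ φ : PropForm, φ.toJ.erase = φ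
  | .atom _ => rfl
  | .neg φ => congrArg PropForm.neg φ.erase_toJ
  | .imp φ ψ => congrArg₂ PropForm.imp φ.erase_toJ ψ.erase_toJ

theorem LukDeriv.imp_self (Γ : Set PropForm) (φ : PropForm) : LukDeriv Γ (φ.imp φ) :=
  .mp (.mp (.ax2 φ (φ.imp φ) φ) (.ax1 φ (φ.imp φ))) (.ax1 φ φ)

theorem JLDeriv.erase {Γ : Set JForm} {φ : JForm} (h : JLDeriv Γ φ) :
    LukDeriv (JForm.erase '' Γ) φ.erase := by
  induction h with
  | prem hφ => exact .prem ⟨_, hφ, rfl⟩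
  | appAx | sumL | sumR => exact .imp_self _ _
  | jax1 => exact .ax1 _ _
  | jax2 => exact .ax2 _ _ _
  | jax3 => exact .ax3 _ _
  | mp _ _ ihImp ihArg | appIntro _ _ ihImp ihArg => exact .mp ihImp ihArg

theorem inversed_internalization_from_premises_general (n : ℕ) (α : Fin n → PropForm)
    (β : PropForm) (t : JTerm) (x : Fin n → ℕ)
    (h : JLDeriv (Set.range fun i => JForm.just (JTerm.var (x i)) (α i).toJ)
      (JForm.just t β.toJ)) :
    LukDeriv (Set.range α) β := by
  simpa [← Set.range_comp, Function.comp_def, JForm.erase] using h.erase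

/-- if `x₁:α₁, …, xₙ:αₙ ⊢_JLŁ t:β` for some term `t` and distinct
variables `x₁, …, xₙ`, then `α₁, …, αₙ ⊢_Ł β`. -/
theorem inversed_internalization_from_premises (n : ℕ) (α : Fin n → PropForm)
    (β : PropForm) (t : JTerm) (x : Fin n → ℕ) (hx : Function.Injective x)
    (h : JLDeriv (Set.range fun i => JForm.just (JTerm.var (x i)) (α i).toJ)
      (JForm.just t β.toJ)) :
    LukDeriv (Set.range α) β :=
  inversed_internalization_from_premises_general n α β t x h
end

section
/- (Soundness and completeness of JLŁ relative to Łukasiewicz's system, combined form.) For every propositional formula β, the following are equivalent: (i) β is a classical tautology; (ii) ⊢_Ł β; (iii) there exists a justification term t such that ⊢_JLŁ t:β. Here equivalence (i)⇔(ii) is the soundness and completeness of Łukasiewicz's proof system for classical propositional logic, and (ii)⇔(iii) is the correspondence between Ł-theorems and justified JLŁ-theorems. -/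
/-- Classical evaluation of a propositional formula under a valuation. -/
def PropForm.eval (v : ℕ → Bool) : PropForm → Bool
  | .atom n  => v n
  | .neg φ   => !(φ.eval v)
  | .imp φ ψ => !(φ.eval v) || ψ.eval v

/-- A propositional formula is a classical tautology if it is true under every
valuation. -/
def PropForm.Tautology (β : PropForm) : Prop := ∀ v : ℕ → Bool, β.eval v = true

namespace LukDeriv

variable {Γ Δ : Set PropForm} {φ ψ χ : PropForm}

theorem mono (h : LukDeriv Γ φ) (hΓΔ : Γ ⊆ Δ) : LukDeriv Δ φ := by
  induction h with
  | prem h => exact .prem (hΓΔ h)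
  | ax1 φ ψ => exact .ax1 φ ψ
  | ax2 φ ψ χ => exact .ax2 φ ψ χ
  | ax3 φ ψ => exact .ax3 φ ψ
  | mp _ _ ih₁ ih₂ => exact .mp ih₁ ih₂

theorem hyp : LukDeriv (insert φ Γ) φ := .prem (Set.mem_insert _ _)

theorem imp_self_s12 (Γ : Set PropForm) (φ : PropForm) : LukDeriv Γ (φ.imp φ) :=
  .mp (.mp (.ax2 φ (φ.imp φ) φ) (.ax1 φ (φ.imp φ))) (.ax1 φ φ)

theorem deduction (h : LukDeriv (insert φ Γ) ψ) : LukDeriv Γ (φ.imp ψ) := by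
  generalize hΔ : insert φ Γ = Δ at h
  induction h with
  | prem h =>
    subst hΔ
    rcases Set.mem_insert_iff.1 h with rfl | h
    · exact imp_self_s12 _ _
    · exact .mp (.ax1 _ _) (.prem h)
  | ax1 a b => exact .mp (.ax1 _ _) (.ax1 a b)
  | ax2 a b c => exact .mp (.ax1 _ _) (.ax2 a b c)
  | ax3 a b => exact .mp (.ax1 _ _) (.ax3 a b)
  | mp _ _ ih₁ ih₂ => exact .mp (.mp (.ax2 _ _ _) ih₁) ih₂

theorem imp_trans (h₁ : LukDeriv Γ (φ.imp ψ)) (h₂ : LukDeriv Γ (ψ.imp χ)) :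
    LukDeriv Γ (φ.imp χ) :=
  deduction <| .mp (h₂.mono (Set.subset_insert _ _)) (.mp (h₁.mono (Set.subset_insert _ _)) hyp)

theorem absurd (Γ : Set PropForm) (φ ψ : PropForm) : LukDeriv Γ (φ.neg.imp (φ.imp ψ)) :=
  deduction <| .mp (.ax3 ψ φ) (.mp (.ax1 _ _) hyp)

theorem of_neg_neg (Γ : Set PropForm) (φ : PropForm) : LukDeriv Γ (φ.neg.neg.imp φ) := by
  apply deduction
  have h : LukDeriv (insert φ.neg.neg Γ) (φ.neg.imp (φ.imp φ).neg) :=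
    .mp (absurd _ φ.neg (φ.imp φ).neg) hyp
  exact .mp (.mp (.ax3 φ (φ.imp φ)) h) (imp_self_s12 _ φ)

theorem neg_neg_intro (Γ : Set PropForm) (φ : PropForm) : LukDeriv Γ (φ.imp φ.neg.neg) :=
  .mp (.ax3 φ.neg.neg φ) (of_neg_neg Γ φ.neg)

theorem mt (Γ : Set PropForm) (φ ψ : PropForm) :
    LukDeriv Γ ((φ.imp ψ).imp (ψ.neg.imp φ.neg)) := by
  apply deduction
  exact .mp (.ax3 φ.neg ψ.neg) (imp_trans (imp_trans (of_neg_neg _ φ) hyp) (neg_neg_intro _ ψ))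

theorem neg_imp_intro (Γ : Set PropForm) (φ ψ : PropForm) :
    LukDeriv Γ (φ.imp (ψ.neg.imp (φ.imp ψ).neg)) := by
  apply deduction
  have modus_ponens : LukDeriv (insert φ Γ) ((φ.imp ψ).imp ψ) :=
    deduction <| .mp hyp (hyp.mono (Set.subset_insert _ _))
  exact .mp (mt _ (φ.imp ψ) ψ) modus_ponens

theorem by_cases (Γ : Set PropForm) (φ ψ : PropForm) :
    LukDeriv Γ ((φ.imp ψ).imp ((φ.neg.imp ψ).imp ψ)) := by
  apply deduction; apply deduction
  set Γ' := insert (φ.neg.imp ψ) (insert (φ.imp ψ) Γ)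
  have hφψ : LukDeriv (insert ψ.neg Γ') (φ.imp ψ) :=
    hyp.mono ((Set.subset_insert _ _).trans (Set.subset_insert _ _))
  have hnφ : LukDeriv (insert ψ.neg Γ') φ.neg := .mp (.mp (mt _ φ ψ) hφψ) hyp
  have key : LukDeriv Γ' (ψ.neg.imp (φ.neg.imp ψ).neg) :=
    deduction <| .mp (.mp (neg_imp_intro _ φ.neg ψ) hnφ) hyp
  exact .mp (.mp (.ax3 ψ (φ.neg.imp ψ)) key) hyp

theorem eval_eq_true (h : LukDeriv Γ φ) (v : ℕ → Bool)
    (hΓ : ∀ ψ ∈ Γ, ψ.eval v = true) : φ.eval v = true := by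
  induction h with
  | prem h => exact hΓ _ h
  | ax1 φ ψ => simp only [PropForm.eval]; cases φ.eval v <;> cases ψ.eval v <;> rfl
  | ax2 φ ψ χ =>
    simp only [PropForm.eval]
    cases φ.eval v <;> cases ψ.eval v <;> cases χ.eval v <;> rfl
  | ax3 φ ψ => simp only [PropForm.eval]; cases φ.eval v <;> cases ψ.eval v <;> rfl
  | mp _ _ ih₁ ih₂ => simpa [PropForm.eval, ih₂] using ih₁

end LukDeriv

namespace PropForm

def lit (v : ℕ → Bool) (φ : PropForm) : PropForm :=
  if φ.eval v then φ else φ.neg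

def atomBound : PropForm → ℕ
  | .atom n => n + 1
  | .neg φ => φ.atomBound
  | .imp φ ψ => max φ.atomBound ψ.atomBound

def litCtx (v : ℕ → Bool) (n : ℕ) : Set PropForm :=
  (fun k => (atom k).lit v) '' Set.Iio n

theorem litCtx_zero (v : ℕ → Bool) : litCtx v 0 = ∅ := by
  simp [litCtx]

theorem litCtx_succ (v : ℕ → Bool) (n : ℕ) :
    litCtx v (n + 1) = insert ((atom n).lit v) (litCtx v n) := by
  rw [litCtx, Set.Iio_add_one_eq_Iic, ← Set.Iio_insert, Set.image_insert_eq, litCtx]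

theorem litCtx_update (v : ℕ → Bool) (n : ℕ) (b : Bool) :
    litCtx (Function.update v n b) n = litCtx v n :=
  Set.image_congr fun k hk => by
    rw [lit, lit, eval, eval, Function.update_of_ne (Set.mem_Iio.1 hk).ne]

end PropForm

open PropForm

namespace LukDeriv

theorem kalmar (v : ℕ → Bool) {n : ℕ} :
    ∀ φ : PropForm, φ.atomBound ≤ n → LukDeriv (litCtx v n) (φ.lit v)
  | .atom k, hk => .prem ⟨k, hk, rfl⟩
  | .neg φ, hφn => by
    have ih := kalmar v φ hφn
    cases hφ : φ.eval v
    · simpa [lit, eval, hφ] using ih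
    · simp only [lit, eval, hφ] at ih ⊢
      exact .mp (neg_neg_intro _ φ) ih
  | .imp φ ψ, hn => by
    have ihφ := kalmar v φ (le_of_max_le_left hn)
    have ihψ := kalmar v ψ (le_of_max_le_right hn)
    cases hφ : φ.eval v
    · simp only [lit, eval, hφ] at ihφ ⊢
      exact .mp (absurd _ φ ψ) ihφ
    cases hψ : ψ.eval v
    · simp only [lit, eval, hφ, hψ] at ihφ ihψ ⊢
      exact .mp (.mp (neg_imp_intro _ φ ψ) ihφ) ihψ
    · simp only [lit, eval, hφ, hψ] at ihψ ⊢
      exact .mp (.ax1 ψ φ) ihψ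

theorem of_forall_litCtx {β : PropForm} :
    ∀ n : ℕ, (∀ v, LukDeriv (litCtx v n) β) → LukDeriv ∅ β
  | 0, h => litCtx_zero (fun _ => true) ▸ h fun _ => true
  | n + 1, h => of_forall_litCtx n fun v => by
    have h_of (b : Bool) :
        LukDeriv (insert ((atom n).lit (Function.update v n b)) (litCtx v n)) β := by
      rw [← litCtx_update v n b, ← litCtx_succ]
      exact h _
    have h_pos := deduction (by simpa [lit, eval] using h_of true)
    have h_neg := deduction (by simpa [lit, eval] using h_of false)
    exact .mp (.mp (by_cases _ (atom n) β) h_pos) h_neg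

theorem of_tautology {β : PropForm} (h : β.Tautology) : LukDeriv ∅ β :=
  of_forall_litCtx β.atomBound fun v => by
    simpa [lit, h v] using kalmar v β le_rfl

end LukDeriv

def JForm.forget : JForm → PropForm
  | .atom n => .atom n
  | .neg φ => φ.forget.neg
  | .imp φ ψ => φ.forget.imp ψ.forget
  | .just _ φ => φ.forget

@[simp]
theorem PropForm.forget_toJ (β : PropForm) : β.toJ.forget = β := by
  induction β with
  | atom n => rfl
  | neg φ ih => simp [PropForm.toJ, JForm.forget, ih]
  | imp φ ψ ih₁ ih₂ => simp [PropForm.toJ, JForm.forget, ih₁, ih₂]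

theorem JLDeriv.forget {Γ : Set JForm} {χ : JForm} (h : JLDeriv Γ χ) :
    LukDeriv (JForm.forget '' Γ) χ.forget := by
  induction h with
  | prem h => exact .prem (Set.mem_image_of_mem _ h)
  | appAx s t φ ψ => exact .imp_self _ (φ.forget.imp ψ.forget)
  | sumL s t ψ => exact .imp_self _ ψ.forget
  | sumR s t ψ => exact .imp_self _ ψ.forget
  | jax1 φ ψ => exact .ax1 φ.forget ψ.forget
  | jax2 φ ψ χ => exact .ax2 φ.forget ψ.forget χ.forget
  | jax3 φ ψ => exact .ax3 φ.forget ψ.forget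
  | mp _ _ ih₁ ih₂ => exact .mp ih₁ ih₂
  | appIntro _ _ ih₁ ih₂ => exact .mp ih₁ ih₂

theorem LukDeriv.exists_jlDeriv_just {Γ : Set PropForm} {β : PropForm} (x : PropForm → JTerm)
    (h : LukDeriv Γ β) :
    ∃ t : JTerm, JLDeriv ((fun φ => JForm.just (x φ) φ.toJ) '' Γ) (JForm.just t β.toJ) := by
  induction h with
  | @prem φ h => exact ⟨x φ, .prem (Set.mem_image_of_mem _ h)⟩
  | ax1 φ ψ => exact ⟨c1, .jax1 φ.toJ ψ.toJ⟩
  | ax2 φ ψ χ => exact ⟨c2, .jax2 φ.toJ ψ.toJ χ.toJ⟩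
  | ax3 φ ψ => exact ⟨c3, .jax3 φ.toJ ψ.toJ⟩
  | mp _ _ ih₁ ih₂ =>
    obtain ⟨s, hs⟩ := ih₁
    obtain ⟨t, ht⟩ := ih₂
    exact ⟨s.app t, .appIntro hs ht⟩

/-- Soundness and completeness of JLŁ relative to Łukasiewicz's
system, combined form: for every propositional formula `β`, being a classical
tautology, being an Ł-theorem, and having a justified JLŁ-proof are equivalent. -/
theorem tautology_iff_luk_iff_justified (β : PropForm) :
    (β.Tautology ↔ LukDeriv ∅ β) ∧
      (LukDeriv ∅ β ↔ ∃ t : JTerm, JLDeriv ∅ (JForm.just t β.toJ)) := by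
  refine ⟨⟨LukDeriv.of_tautology, fun h v => h.eval_eq_true v (by simp)⟩,
    ⟨fun h => ?_, ?_⟩⟩
  · simpa using h.exists_jlDeriv_just fun _ => .var 0
  · rintro ⟨t, ht⟩
    simpa [JForm.forget] using ht.forget
end
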